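/- The matrix F̃₂ defined in the quadratization, whose only nonzero blocks are A_k^i, A_{k+1}^i, …, A_{2(k-1)}^{k-1} for 1 ≤ i ≤ k−1, where these blocks satisfy ‖A_{i+j-1}^i‖₂ ≤ i‖F_j‖₂ with i ≤ k−1, satisfies ‖F̃₂‖₂ ≤ (k−1) Σ_{i=2}^{k} ‖F_i‖₂. -/

import Mathlib

/-- The spectral norm of a real matrix: the operator norm of the induced
linear map between Euclidean spaces. -/
noncomputable def specNorm {α β : Type*} [Fintype α] [Fintype β] [DecidableEq β]
    (A : Matrix α β ℝ) : ℝ :=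
  ‖LinearMap.toContinuousLinearMap (Matrix.toEuclideanLin A)‖

lemma specNorm_nonneg {α β : Type*} [Fintype α] [Fintype β] [DecidableEq β]
    (A : Matrix α β ℝ) : 0 ≤ specNorm A := norm_nonneg _

lemma specNorm_zero {α β : Type*} [Fintype α] [Fintype β] [DecidableEq β] :
    specNorm (0 : Matrix α β ℝ) = 0 := by
  unfold specNorm
  rw [map_zero, map_zero, norm_zero]

lemma specNorm_sum_le {α β ι : Type*} [Fintype α] [Fintype β] [DecidableEq β]
    (s : Finset ι) (F : ι → Matrix α β ℝ) :
    specNorm (∑ d ∈ s, F d) ≤ ∑ d ∈ s, specNorm (F d) := by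
  unfold specNorm
  rw [map_sum, map_sum]
  exact norm_sum_le _ _

lemma euclid_norm_mulVec_le {α β : Type*} [Fintype α] [Fintype β] [DecidableEq β]
    (A : Matrix α β ℝ) (x : β → ℝ) :
    Real.sqrt (∑ a, (A.mulVec x a)^2) ≤ specNorm A * Real.sqrt (∑ b, (x b)^2) := by
  have h := (LinearMap.toContinuousLinearMap (Matrix.toEuclideanLin A)).le_opNorm
    ((WithLp.equiv 2 (β → ℝ)).symm x)
  simpa [specNorm, Matrix.toEuclideanLin_apply, EuclideanSpace.norm_eq,
    Real.norm_eq_abs, sq_abs] using h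

lemma sum_sq_mulVec_le {α β : Type*} [Fintype α] [Fintype β] [DecidableEq β]
    (A : Matrix α β ℝ) (x : β → ℝ) :
    ∑ a, (A.mulVec x a)^2 ≤ (specNorm A)^2 * ∑ b, (x b)^2 := by
  have h1 : (0:ℝ) ≤ ∑ a, (A.mulVec x a)^2 := Finset.sum_nonneg fun _ _ => sq_nonneg _
  have h2 : (0:ℝ) ≤ ∑ b, (x b)^2 := Finset.sum_nonneg fun _ _ => sq_nonneg _
  have hsq := pow_le_pow_left₀ (Real.sqrt_nonneg _) (euclid_norm_mulVec_le A x) 2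
  rwa [Real.sq_sqrt h1, mul_pow, Real.sq_sqrt h2] at hsq

/-- A block matrix in which each block column `l` has (at most) one nonzero
block, located in block row `f l` with `f` injective, has spectral norm at
most the sup of the block norms. -/
lemma specNorm_blockCol_le {n m : ℕ} {R : Fin n → Type} {C : Fin m → Type}
    [∀ i, Fintype (R i)] [∀ l, Fintype (C l)] [∀ l, DecidableEq (C l)]
    (M : Matrix ((i : Fin n) × R i) ((l : Fin m) × C l) ℝ)
    (f : Fin m → Fin n) (hf : Function.Injective f)
    (hz : ∀ (i : Fin n) (l : Fin m) (r : R i) (c : C l), i ≠ f l → M ⟨i,r⟩ ⟨l,c⟩ = 0)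
    (b : ℝ) (hb0 : 0 ≤ b)
    (hb : ∀ l, specNorm (Matrix.of fun (r : R (f l)) (c : C l) => M ⟨f l, r⟩ ⟨l, c⟩) ≤ b) :
    specNorm M ≤ b := by
  unfold specNorm
  refine ContinuousLinearMap.opNorm_le_bound _ hb0 ?_
  intro x
  set x' : ((l : Fin m) × C l) → ℝ := fun q => x q with hx'
  have happ : ‖(LinearMap.toContinuousLinearMap (Matrix.toEuclideanLin M)) x‖
      = Real.sqrt (∑ p, (M.mulVec x' p)^2) := by
    simp [Matrix.toEuclideanLin_apply, EuclideanSpace.norm_eq, Real.norm_eq_abs, sq_abs]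
    rfl
  have hxnorm : ‖x‖ = Real.sqrt (∑ q, (x' q)^2) := by
    simp [EuclideanSpace.norm_eq, Real.norm_eq_abs, sq_abs, hx']
  rw [happ, hxnorm]
  have key : ∑ p, (M.mulVec x' p)^2 ≤ b^2 * ∑ q, (x' q)^2 := by
    have hsig : ∀ (F : ((i : Fin n) × R i) → ℝ), ∑ p, F p = ∑ i, ∑ r, F ⟨i, r⟩ := by
      intro F; rw [← Finset.univ_sigma_univ, Finset.sum_sigma]
    have hsig' : ∀ (F : ((l : Fin m) × C l) → ℝ), ∑ q, F q = ∑ l, ∑ c, F ⟨l, c⟩ := by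
      intro F; rw [← Finset.univ_sigma_univ, Finset.sum_sigma]
    have hrow0 : ∀ (i : Fin n) (r : R i), i ∉ Finset.univ.image f →
        M.mulVec x' ⟨i, r⟩ = 0 := by
      intro i r hi
      apply Finset.sum_eq_zero
      rintro ⟨l, c⟩ -
      have : i ≠ f l := fun h => hi (by simp [h])
      show M ⟨i, r⟩ ⟨l, c⟩ * x' ⟨l, c⟩ = 0
      rw [hz i l r c this, zero_mul]
    have hrowf : ∀ (l : Fin m) (r : R (f l)), M.mulVec x' ⟨f l, r⟩
        = (Matrix.of fun (r : R (f l)) (c : C l) => M ⟨f l, r⟩ ⟨l, c⟩).mulVec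
            (fun c => x' ⟨l, c⟩) r := by
      intro l r
      show ∑ q, M ⟨f l, r⟩ q * x' q = _
      rw [hsig' fun q => M ⟨f l, r⟩ q * x' q]
      refine Finset.sum_eq_single l (fun l' _ hne => Finset.sum_eq_zero fun c _ => ?_)
        (by simp)
      rw [hz (f l) l' r c (fun h => hne (hf h.symm)), zero_mul]
    rw [hsig fun p => (M.mulVec x' p)^2]
    have h1 : ∑ i, ∑ r, (M.mulVec x' ⟨i, r⟩)^2
        = ∑ i ∈ Finset.univ.image f, ∑ r, (M.mulVec x' ⟨i, r⟩)^2 := by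
      refine (Finset.sum_subset (Finset.subset_univ _) fun i _ hi => ?_).symm
      exact Finset.sum_eq_zero fun r _ => by rw [hrow0 i r hi]; ring
    rw [h1, Finset.sum_image (fun l _ l' _ h => hf h)]
    calc ∑ l, ∑ r, (M.mulVec x' ⟨f l, r⟩)^2
        ≤ ∑ l, b^2 * ∑ c, (x' ⟨l, c⟩)^2 := by
          refine Finset.sum_le_sum fun l _ => ?_
          have := sum_sq_mulVec_le
            (Matrix.of fun (r : R (f l)) (c : C l) => M ⟨f l, r⟩ ⟨l, c⟩)
            (fun c => x' ⟨l, c⟩)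
          simp only [hrowf l]
          refine this.trans (mul_le_mul_of_nonneg_right
            (pow_le_pow_left₀ (specNorm_nonneg _) (hb l) 2)
            (Finset.sum_nonneg fun _ _ => sq_nonneg _))
      _ = b^2 * ∑ q, (x' q)^2 := by rw [← Finset.mul_sum, hsig' fun q => (x' q)^2]
  calc Real.sqrt (∑ p, (M.mulVec x' p)^2) ≤ Real.sqrt (b^2 * ∑ q, (x' q)^2) :=
        Real.sqrt_le_sqrt key
    _ = b * Real.sqrt (∑ q, (x' q)^2) := by
        rw [Real.sqrt_mul (sq_nonneg b), Real.sqrt_sq hb0]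

/-- Norm bound for the quadratization matrix `F̃₂`. -/
theorem specNorm_Ftilde2_le {k : ℕ} (hk : 2 ≤ k) (g : ℕ → ℝ) (hg : ∀ j, 0 ≤ g j)
    (R C : Fin (k - 1) → Type)
    [∀ i, Fintype (R i)] [∀ i, DecidableEq (R i)]
    [∀ i, Fintype (C i)] [∀ i, DecidableEq (C i)]
    (M : Matrix ((i : Fin (k - 1)) × R i) ((l : Fin (k - 1)) × C l) ℝ)
    (hzero : ∀ (i l : Fin (k - 1)), i.1 < l.1 →
      (Matrix.of fun (r : R i) (c : C l) => M ⟨i, r⟩ ⟨l, c⟩) = 0)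
    (hnorm : ∀ (i l : Fin (k - 1)), l.1 ≤ i.1 →
      specNorm (Matrix.of fun (r : R i) (c : C l) => M ⟨i, r⟩ ⟨l, c⟩) ≤
        (i.1 + 1 : ℝ) * g (k + l.1 - i.1)) :
    specNorm M ≤ ((k : ℝ) - 1) * ∑ j ∈ Finset.Icc 2 k, g j := by
  have hk1 : (1:ℝ) ≤ (k:ℝ) - 1 := by
    have : (2:ℝ) ≤ (k:ℝ) := by exact_mod_cast hk
    linarith
  -- the d-th sub-block-diagonal of M
  set D : ℕ → Matrix ((i : Fin (k - 1)) × R i) ((l : Fin (k - 1)) × C l) ℝ :=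
    fun d => Matrix.of fun p q => if p.1.1 = q.1.1 + d then M p q else 0 with hD
  have hM : M = ∑ d ∈ Finset.range (k - 1), D d := by
    ext ⟨i, r⟩ ⟨l, c⟩
    by_cases h : l.1 ≤ i.1
    · rw [Matrix.sum_apply]
      rw [Finset.sum_eq_single (i.1 - l.1)]
      · simp only [hD, Matrix.of_apply]
        rw [if_pos (by omega)]
      · intro d _ hd
        simp only [hD, Matrix.of_apply]
        rw [if_neg (by omega)]
      · intro hd
        exact absurd (Finset.mem_range.mpr (by omega)) hd
    · have hMz : (Matrix.of fun (r : R i) (c : C l) => M ⟨i, r⟩ ⟨l, c⟩) r c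
          = (0 : Matrix (R i) (C l) ℝ) r c := by rw [hzero i l (by omega)]
      simp only [Matrix.of_apply, Matrix.zero_apply] at hMz
      rw [hMz, Matrix.sum_apply]
      refine (Finset.sum_eq_zero fun d hd => ?_).symm
      simp only [hD, Matrix.of_apply]
      rw [if_neg (by omega)]
  have hDle : ∀ d ∈ Finset.range (k - 1), specNorm (D d) ≤ ((k:ℝ) - 1) * g (k - d) := by
    intro d hd
    rw [Finset.mem_range] at hd
    -- the column-to-row assignment for D d
    set f : Fin (k - 1) → Fin (k - 1) := fun l =>
      if h : l.1 + d < k - 1 then ⟨l.1 + d, h⟩ else ⟨l.1 + d - (k - 1), by omega⟩ with hfdef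
    have hfv : ∀ l : Fin (k - 1), (l.1 + d < k - 1 ∧ (f l).1 = l.1 + d) ∨
        (¬ (l.1 + d < k - 1) ∧ (f l).1 = l.1 + d - (k - 1)) := by
      intro l
      by_cases h : l.1 + d < k - 1
      · left
        refine ⟨h, ?_⟩
        simp only [hfdef]
        rw [dif_pos h]
      · right
        refine ⟨h, ?_⟩
        simp only [hfdef]
        rw [dif_neg h]
    have hf : Function.Injective f := by
      intro a b h
      have ha2 := a.2
      have hb2 := b.2
      have hval : (f a).1 = (f b).1 := congrArg Fin.val h
      rcases hfv a with ⟨h1, h2⟩ | ⟨h1, h2⟩ <;> rcases hfv b with ⟨h3, h4⟩ | ⟨h3, h4⟩ <;>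
        exact Fin.ext (by omega)
    have hz : ∀ (i l : Fin (k - 1)) (r : R i) (c : C l),
        i ≠ f l → (D d) ⟨i, r⟩ ⟨l, c⟩ = 0 := by
      intro i l r c hne
      simp only [hD, Matrix.of_apply]
      rw [if_neg]
      intro hcontra
      apply hne
      have hlt : l.1 + d < k - 1 := hcontra ▸ i.2
      have : f l = ⟨l.1 + d, hlt⟩ := dif_pos hlt
      rw [this]
      exact Fin.ext hcontra
    refine specNorm_blockCol_le (D d) f hf hz _
      (mul_nonneg (by linarith) (hg _)) ?_
    intro l
    by_cases hlt : l.1 + d < k - 1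
    · have hfl : f l = ⟨l.1 + d, hlt⟩ := dif_pos hlt
      rw [hfl]
      have hblock : (Matrix.of fun (r : R ⟨l.1 + d, hlt⟩) (c : C l) =>
            (D d) ⟨⟨l.1 + d, hlt⟩, r⟩ ⟨l, c⟩)
          = (Matrix.of fun (r : R ⟨l.1 + d, hlt⟩) (c : C l) =>
            M ⟨⟨l.1 + d, hlt⟩, r⟩ ⟨l, c⟩) := by
        ext r c
        simp [hD]
      rw [hblock]
      have := hnorm ⟨l.1 + d, hlt⟩ l (by simp)
      refine this.trans ?_
      have harg : k + l.1 - (l.1 + d) = k - d := by omega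
      rw [harg]
      refine mul_le_mul_of_nonneg_right ?_ (hg _)
      have hle : l.1 + d + 1 ≤ k - 1 := by omega
      have h2 : ((l.1 + d + 1 : ℕ) : ℝ) ≤ ((k - 1 : ℕ) : ℝ) := Nat.cast_le.mpr hle
      rw [Nat.cast_sub (by omega : 1 ≤ k)] at h2
      push_cast at h2 ⊢
      linarith
    · have hfl : f l = ⟨l.1 + d - (k - 1), by omega⟩ := dif_neg hlt
      rw [hfl]
      have hblock : (Matrix.of fun (r : R ⟨l.1 + d - (k - 1), by omega⟩) (c : C l) =>
            (D d) ⟨⟨l.1 + d - (k - 1), by omega⟩, r⟩ ⟨l, c⟩)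
          = (0 : Matrix (R ⟨l.1 + d - (k - 1), by omega⟩) (C l) ℝ) := by
        ext r c
        simp only [hD, Matrix.of_apply, Matrix.zero_apply]
        rw [if_neg (by omega)]
      rw [hblock, specNorm_zero]
      exact mul_nonneg (by linarith) (hg _)
  calc specNorm M = specNorm (∑ d ∈ Finset.range (k - 1), D d) := by rw [← hM]
    _ ≤ ∑ d ∈ Finset.range (k - 1), specNorm (D d) := specNorm_sum_le _ _
    _ ≤ ∑ d ∈ Finset.range (k - 1), ((k:ℝ) - 1) * g (k - d) :=
        Finset.sum_le_sum hDle
    _ = ((k:ℝ) - 1) * ∑ d ∈ Finset.range (k - 1), g (k - d) := by rw [Finset.mul_sum]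
    _ = ((k:ℝ) - 1) * ∑ j ∈ Finset.Icc 2 k, g j := by
        congr 1
        refine Finset.sum_nbij' (fun d => k - d) (fun j => k - j) ?_ ?_ ?_ ?_ ?_
        · intro d hd; rw [Finset.mem_range] at hd; rw [Finset.mem_Icc]; omega
        · intro j hj; rw [Finset.mem_Icc] at hj; rw [Finset.mem_range]; omega
        · intro d hd; rw [Finset.mem_range] at hd; omega
        · intro j hj; rw [Finset.mem_Icc] at hj; omega
        · intro d hd; rfl
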